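/- arXiv:1907.07123 — 2 statements merged into one kernel-verified Lean document; each statement's English description precedes it below -/
import Mathlib

section
/- Let k ≠ 0 and let W denote the Lambert W function (the inverse of w ↦ w·e^w on [0,∞)). For t > 0 and k > 0, define u(t,x) = 2x/k − W((t²/k)·e^{2x/k}) and v(t,x) = −(k/t)·W((t²/k)·e^{2x/k}). Then (u,v) satisfies the nonlinear telegraph system v_t + k·e^u·u_x − e^u = 0 and u_t − v_x = 0. -/
/-- Partial derivative in the first (time) variable. -/
noncomputable def pt (u : ℝ → ℝ → ℝ) : ℝ → ℝ → ℝ := fun t x => deriv (fun s => u s x) t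

/-- Partial derivative in the second (space) variable. -/
noncomputable def px (u : ℝ → ℝ → ℝ) : ℝ → ℝ → ℝ := fun t x => deriv (fun y => u t y) x

/-!
Write `z = (t²/k)·e^{2x/k}` and `w = W(z)`, so `u = 2x/k − w` and `v = −(k/t)·w`.
Since `z_t = (2/t)·z`, `z_x = (2/k)·z` and `z·W'(z) = w/(1+w)`, both `w_t` and `w_x` are
multiples of `w/(1+w)`; and `w·eʷ = z` gives `eᵘ = e^{2x/k}·e^{−w} = k·w/t²`.
With these, both equations reduce to identities between rational functions of `t`, `k`, `w`.
-/

open Real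

noncomputable def lambertArg (k t x : ℝ) : ℝ := t ^ 2 / k * exp (2 * x / k)

lemma lambertArg_pos {k : ℝ} (hk : 0 < k) {t : ℝ} (ht : t ≠ 0) (x : ℝ) :
    0 < lambertArg k t x := by
  unfold lambertArg
  positivity

lemma hasDerivAt_lambertArg_time (k x t : ℝ) :
    HasDerivAt (fun s => lambertArg k s x) (2 / t * lambertArg k t x) t := by
  refine (((hasDerivAt_pow 2 t).div_const k).mul_const (exp (2 * x / k))).congr_deriv ?_
  unfold lambertArg
  rcases eq_or_ne t 0 with rfl | ht
  · simp
  · field_simp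
    norm_num

lemma hasDerivAt_lambertArg_space (k t x : ℝ) :
    HasDerivAt (lambertArg k t) (2 / k * lambertArg k t x) x := by
  have hlin : HasDerivAt (fun y : ℝ => 2 * y / k) (2 / k) x := by
    simpa using ((hasDerivAt_id x).const_mul 2).div_const k
  refine (hlin.exp.const_mul (t ^ 2 / k)).congr_deriv ?_
  unfold lambertArg
  ring

lemma HasDerivAt.lambertW {W f : ℝ → ℝ} {a c : ℝ}
    (hf : HasDerivAt f (c * f a) a) (hfa : f a ≠ 0)
    (hW : HasDerivAt W (W (f a) / (f a * (1 + W (f a)))) (f a)) :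
    HasDerivAt (fun y => W (f y)) (c * (W (f a) / (1 + W (f a)))) a := by
  refine (hW.comp a hf).congr_deriv ?_
  rw [mul_comm, mul_assoc, ← mul_div_assoc, mul_div_mul_left _ _ hfa]

lemma exp_neg_eq_div_of_mul_exp_eq {w z : ℝ} (h : w * exp w = z) (hz : z ≠ 0) :
    exp (-w) = w / z := by
  rw [exp_neg, eq_div_iff hz, ← h]
  field_simp

lemma pt_eq_of_hasDerivAt {u : ℝ → ℝ → ℝ} {g : ℝ → ℝ} {t x g' : ℝ} (ht : 0 < t)
    (hu : ∀ s, 0 < s → u s x = g s) (hg : HasDerivAt g g' t) : pt u t x = g' := by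
  have hloc : (fun s => u s x) =ᶠ[nhds t] g := by
    filter_upwards [eventually_gt_nhds ht] with s hs using hu s hs
  rw [pt, hloc.deriv_eq, hg.deriv]

lemma px_eq_of_hasDerivAt {u : ℝ → ℝ → ℝ} {g : ℝ → ℝ} {t x g' : ℝ}
    (hu : ∀ y, u t y = g y) (hg : HasDerivAt g g' x) : px u t x = g' := by
  rw [px, funext hu, hg.deriv]

theorem stmt_6_general (k : ℝ) (hkpos : 0 < k)
    (W : ℝ → ℝ)
    (hW0 : ∀ z : ℝ, 0 ≤ z → 0 ≤ W z ∧ W z * Real.exp (W z) = z)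
    (hW' : ∀ z : ℝ, 0 < z → HasDerivAt W (W z / (z * (1 + W z))) z)
    (u v : ℝ → ℝ → ℝ)
    (hu : ∀ t x : ℝ, 0 < t →
      u t x = 2 * x / k - W ((t ^ 2 / k) * Real.exp (2 * x / k)))
    (hv : ∀ t x : ℝ, 0 < t →
      v t x = -(k / t) * W ((t ^ 2 / k) * Real.exp (2 * x / k))) :
    ∀ t x : ℝ, 0 < t →
      pt v t x + k * Real.exp (u t x) * px u t x - Real.exp (u t x) = 0 ∧
      pt u t x - px v t x = 0 := by
  intro t x ht
  have hz := lambertArg_pos hkpos ht.ne' x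
  obtain ⟨hw, hwz⟩ := hW0 _ hz.le
  have hWt := (hasDerivAt_lambertArg_time k x t).lambertW hz.ne' (hW' _ hz)
  have hWx := (hasDerivAt_lambertArg_space k t x).lambertW hz.ne' (hW' _ hz)
  have hkt : HasDerivAt (fun s : ℝ => -(k / s)) (k / t ^ 2) t := by
    refine (((hasDerivAt_inv ht.ne').const_mul k).neg).congr_deriv ?_
    ring
  set w := W (lambertArg k t x)
  have hut : pt u t x = -(2 / t * (w / (1 + w))) :=
    pt_eq_of_hasDerivAt ht (fun s hs => hu s x hs) (hWt.const_sub (2 * x / k))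
  have hvt : pt v t x = k / t ^ 2 * w + -(k / t) * (2 / t * (w / (1 + w))) :=
    pt_eq_of_hasDerivAt ht (fun s hs => hv s x hs) (hkt.mul hWt)
  have hux : px u t x = 2 * 1 / k - 2 / k * (w / (1 + w)) :=
    px_eq_of_hasDerivAt (fun y => hu t y ht)
      ((((hasDerivAt_id x).const_mul 2).div_const k).sub hWx)
  have hvx : px v t x = -(k / t) * (2 / k * (w / (1 + w))) :=
    px_eq_of_hasDerivAt (fun y => hv t y ht) (hWx.const_mul (-(k / t)))
  have hexpu : exp (u t x) = k * w / t ^ 2 := by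
    rw [show u t x = 2 * x / k - w from hu t x ht, sub_eq_add_neg, exp_add,
      exp_neg_eq_div_of_mul_exp_eq hwz hz.ne']
    unfold lambertArg
    field_simp
  have h1w : 1 + w ≠ 0 := by positivity
  rw [hut, hvt, hux, hvx, hexpu]
  constructor <;> field_simp <;> ring

/-- with W the Lambert W function (inverse of w ↦ w·eʷ on [0,∞)),
    for t > 0, k > 0 the pair u(t,x) = 2x/k − W((t²/k)·e^{2x/k}),
    v(t,x) = −(k/t)·W((t²/k)·e^{2x/k}) satisfies the nonlinear telegraph system
    v_t + k·eᵘ·u_x − eᵘ = 0 and u_t − v_x = 0. -/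
theorem stmt_6 (k : ℝ) (hk : k ≠ 0) (hkpos : 0 < k)
    (W : ℝ → ℝ)
    (hW0 : ∀ z : ℝ, 0 ≤ z → 0 ≤ W z ∧ W z * Real.exp (W z) = z)
    (hW' : ∀ z : ℝ, 0 < z → HasDerivAt W (W z / (z * (1 + W z))) z)
    (u v : ℝ → ℝ → ℝ)
    (hu : ∀ t x : ℝ, 0 < t →
      u t x = 2 * x / k - W ((t ^ 2 / k) * Real.exp (2 * x / k)))
    (hv : ∀ t x : ℝ, 0 < t →
      v t x = -(k / t) * W ((t ^ 2 / k) * Real.exp (2 * x / k))) :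
    ∀ t x : ℝ, 0 < t →
      pt v t x + k * Real.exp (u t x) * px u t x - Real.exp (u t x) = 0 ∧
      pt u t x - px v t x = 0 :=
  stmt_6_general k hkpos W hW0 hW' u v hu hv
end

section
/- The equation u_t = u_xx + (u_x)^n with n ≥ 3 an integer admits no cosymmetry of the form β = β(t,x,u) with β never zero: there is no smooth nonvanishing β(t,x,u) such that the expression E_u[β·(u_t − u_xx − (u_x)^n)] vanishes identically in jet coordinates. -/
/-- Partial derivative with respect to the jet coordinate u_{(i,j)} = ∂_t^i ∂_x^j u. -/
noncomputable def pj2 (F : ℝ → ℝ → (ℕ × ℕ → ℝ) → ℝ) (p : ℕ × ℕ) :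
    ℝ → ℝ → (ℕ × ℕ → ℝ) → ℝ :=
  fun t x U => deriv (fun s => F t x (Function.update U p s)) (U p)

/-- Total t-derivative on jet space. -/
noncomputable def DT (F : ℝ → ℝ → (ℕ × ℕ → ℝ) → ℝ) : ℝ → ℝ → (ℕ × ℕ → ℝ) → ℝ :=
  fun t x U => deriv (fun s => F s x U) t
    + ∑' p : ℕ × ℕ, U (p.1 + 1, p.2) * pj2 F p t x U

/-- Total x-derivative on jet space. -/
noncomputable def DX (F : ℝ → ℝ → (ℕ × ℕ → ℝ) → ℝ) : ℝ → ℝ → (ℕ × ℕ → ℝ) → ℝ :=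
  fun t x U => deriv (fun s => F t s U) x
    + ∑' p : ℕ × ℕ, U (p.1, p.2 + 1) * pj2 F p t x U

/-- Euler operator E_u(L) = L_u − D_t L_{u_t} − D_x L_{u_x} + D_x² L_{u_xx}. -/
noncomputable def EulerU (L : ℝ → ℝ → (ℕ × ℕ → ℝ) → ℝ) : ℝ → ℝ → (ℕ × ℕ → ℝ) → ℝ :=
  fun t x U => pj2 L (0, 0) t x U - DT (pj2 L (1, 0)) t x U
    - DX (pj2 L (0, 1)) t x U + DX (DX (pj2 L (0, 2))) t x U

/- ### Auxiliary definitions -/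

noncomputable def Lb (β : ℝ → ℝ → ℝ → ℝ) (n : ℕ) : ℝ → ℝ → (ℕ × ℕ → ℝ) → ℝ :=
  fun t x U => β t x (U (0, 0)) * (U (1, 0) - U (0, 2) - (U (0, 1)) ^ n)

noncomputable def G0 (β : ℝ → ℝ → ℝ → ℝ) : ℝ → ℝ → (ℕ × ℕ → ℝ) → ℝ :=
  fun t x U => β t x (U (0, 0))

noncomputable def G3 (β : ℝ → ℝ → ℝ → ℝ) : ℝ → ℝ → (ℕ × ℕ → ℝ) → ℝ :=
  fun t x U => -β t x (U (0, 0))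

noncomputable def F2 (β : ℝ → ℝ → ℝ → ℝ) (n : ℕ) : ℝ → ℝ → (ℕ × ℕ → ℝ) → ℝ :=
  fun t x U => β t x (U (0, 0)) * -((n : ℝ) * U (0, 1) ^ (n - 1))

noncomputable def G2 (β : ℝ → ℝ → ℝ → ℝ) : ℝ → ℝ → (ℕ × ℕ → ℝ) → ℝ :=
  fun t x U => deriv (fun s => -β t s (U (0, 0))) x
    + U (0, 1) * -(deriv (fun w => β t x w) (U (0, 0)))

lemma pj2_indep {F : ℝ → ℝ → (ℕ × ℕ → ℝ) → ℝ} {p : ℕ × ℕ} {t x : ℝ} {U : ℕ × ℕ → ℝ}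
    (h : ∀ s, F t x (Function.update U p s) = F t x U) : pj2 F p t x U = 0 := by
  have h2 : (fun s => F t x (Function.update U p s)) = fun _ => F t x U := funext h
  unfold pj2
  rw [h2, deriv_const]

lemma pj2_00_congr {F : ℝ → ℝ → (ℕ × ℕ → ℝ) → ℝ} {t x : ℝ} {U U' : ℕ × ℕ → ℝ}
    (h : (fun s => F t x (Function.update U' (0, 0) s))
        = (fun s => F t x (Function.update U (0, 0) s)))
    (h0 : U' (0, 0) = U (0, 0)) : pj2 F (0, 0) t x U' = pj2 F (0, 0) t x U := by
  unfold pj2; rw [h, h0]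

/- ### The four basic partial derivatives of L -/

lemma hL10 (β : ℝ → ℝ → ℝ → ℝ) (n : ℕ) : pj2 (Lb β n) (1, 0) = G0 β := by
  funext t x U
  unfold pj2 G0
  have hfun : (fun s => Lb β n t x (Function.update U (1, 0) s))
      = fun s => β t x (U (0, 0)) * (s - U (0, 2) - U (0, 1) ^ n) := by
    funext s
    simp only [Lb, Function.update_self,
      Function.update_of_ne (by decide : ((0, 0) : ℕ × ℕ) ≠ (1, 0)),
      Function.update_of_ne (by decide : ((0, 2) : ℕ × ℕ) ≠ (1, 0)),
      Function.update_of_ne (by decide : ((0, 1) : ℕ × ℕ) ≠ (1, 0))]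
  rw [hfun]
  have h : HasDerivAt (fun s : ℝ => β t x (U (0, 0)) * (s - U (0, 2) - U (0, 1) ^ n))
      (β t x (U (0, 0)) * 1) (U (1, 0)) :=
    (((hasDerivAt_id _).sub_const _).sub_const _).const_mul _
  simpa using h.deriv

lemma hL02 (β : ℝ → ℝ → ℝ → ℝ) (n : ℕ) : pj2 (Lb β n) (0, 2) = G3 β := by
  funext t x U
  unfold pj2 G3
  have hfun : (fun s => Lb β n t x (Function.update U (0, 2) s))
      = fun s => β t x (U (0, 0)) * (U (1, 0) - s - U (0, 1) ^ n) := by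
    funext s
    simp only [Lb, Function.update_self,
      Function.update_of_ne (by decide : ((0, 0) : ℕ × ℕ) ≠ (0, 2)),
      Function.update_of_ne (by decide : ((1, 0) : ℕ × ℕ) ≠ (0, 2)),
      Function.update_of_ne (by decide : ((0, 1) : ℕ × ℕ) ≠ (0, 2))]
  rw [hfun]
  have h : HasDerivAt (fun s : ℝ => β t x (U (0, 0)) * (U (1, 0) - s - U (0, 1) ^ n))
      (β t x (U (0, 0)) * (-1)) (U (0, 2)) :=
    (((hasDerivAt_id _).const_sub _).sub_const _).const_mul _
  simpa using h.deriv

lemma hL01 (β : ℝ → ℝ → ℝ → ℝ) (n : ℕ) : pj2 (Lb β n) (0, 1) = F2 β n := by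
  funext t x U
  unfold pj2 F2
  have hfun : (fun s => Lb β n t x (Function.update U (0, 1) s))
      = fun s => β t x (U (0, 0)) * (U (1, 0) - U (0, 2) - s ^ n) := by
    funext s
    simp only [Lb, Function.update_self,
      Function.update_of_ne (by decide : ((0, 0) : ℕ × ℕ) ≠ (0, 1)),
      Function.update_of_ne (by decide : ((1, 0) : ℕ × ℕ) ≠ (0, 1)),
      Function.update_of_ne (by decide : ((0, 2) : ℕ × ℕ) ≠ (0, 1))]
  rw [hfun]
  have h : HasDerivAt (fun s : ℝ => β t x (U (0, 0)) * (U (1, 0) - U (0, 2) - s ^ n))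
      (β t x (U (0, 0)) * -((n : ℝ) * U (0, 1) ^ (n - 1))) (U (0, 1)) :=
    ((hasDerivAt_pow n _).const_sub _).const_mul _
  exact h.deriv

lemma hL00 (β : ℝ → ℝ → ℝ → ℝ) (n : ℕ) (t x : ℝ) (U : ℕ × ℕ → ℝ) :
    pj2 (Lb β n) (0, 0) t x U
      = deriv (fun w => β t x w) (U (0, 0)) * (U (1, 0) - U (0, 2) - U (0, 1) ^ n) := by
  unfold pj2
  have hfun : (fun s => Lb β n t x (Function.update U (0, 0) s))
      = fun s => β t x s * (U (1, 0) - U (0, 2) - U (0, 1) ^ n) := by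
    funext s
    simp only [Lb, Function.update_self,
      Function.update_of_ne (by decide : ((1, 0) : ℕ × ℕ) ≠ (0, 0)),
      Function.update_of_ne (by decide : ((0, 2) : ℕ × ℕ) ≠ (0, 0)),
      Function.update_of_ne (by decide : ((0, 1) : ℕ × ℕ) ≠ (0, 0))]
  rw [hfun]
  exact deriv_mul_const_field _

/- ### DX of the (0,2)-derivative -/

lemma hDXG3 (β : ℝ → ℝ → ℝ → ℝ) : DX (G3 β) = G2 β := by
  funext t x U
  unfold DX G2
  congr 1
  have hz : ∀ p : ℕ × ℕ, p ≠ (0, 0) →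
      U (p.1, p.2 + 1) * pj2 (G3 β) p t x U = 0 := by
    intro p hp
    have : pj2 (G3 β) p t x U = 0 := pj2_indep (fun s => by
      simp only [G3, Function.update_of_ne (Ne.symm hp)])
    rw [this, mul_zero]
  rw [tsum_eq_single ((0, 0) : ℕ × ℕ) hz]
  have h1 : pj2 (G3 β) (0, 0) t x U = -(deriv (fun w => β t x w) (U (0, 0))) := by
    unfold pj2
    have hfun : (fun s => G3 β t x (Function.update U (0, 0) s))
        = fun s => -β t x s := by
      funext s; simp only [G3, Function.update_self]
    rw [hfun]
    exact deriv.neg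
  rw [h1]

/- ### jet-derivatives of G0, F2, G2 -/

lemma pj2_G0_ne (β : ℝ → ℝ → ℝ → ℝ) {p : ℕ × ℕ} (hp : p ≠ (0, 0)) (t x : ℝ)
    (U : ℕ × ℕ → ℝ) : pj2 (G0 β) p t x U = 0 :=
  pj2_indep (fun s => by simp only [G0, Function.update_of_ne (Ne.symm hp)])

lemma pj2_F2_ne (β : ℝ → ℝ → ℝ → ℝ) (n : ℕ) {p : ℕ × ℕ} (hp0 : p ≠ (0, 0))
    (hp1 : p ≠ (0, 1)) (t x : ℝ) (U : ℕ × ℕ → ℝ) : pj2 (F2 β n) p t x U = 0 :=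
  pj2_indep (fun s => by
    simp only [F2, Function.update_of_ne (Ne.symm hp0), Function.update_of_ne (Ne.symm hp1)])

lemma pj2_G2_ne (β : ℝ → ℝ → ℝ → ℝ) {p : ℕ × ℕ} (hp0 : p ≠ (0, 0))
    (hp1 : p ≠ (0, 1)) (t x : ℝ) (U : ℕ × ℕ → ℝ) : pj2 (G2 β) p t x U = 0 :=
  pj2_indep (fun s => by
    simp only [G2, Function.update_of_ne (Ne.symm hp0), Function.update_of_ne (Ne.symm hp1)])

lemma pj2_F2_01 (β : ℝ → ℝ → ℝ → ℝ) (n : ℕ) (t x : ℝ) (U : ℕ × ℕ → ℝ) :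
    pj2 (F2 β n) (0, 1) t x U
      = β t x (U (0, 0)) * -((n : ℝ) * (((n - 1 : ℕ) : ℝ) * U (0, 1) ^ (n - 1 - 1))) := by
  unfold pj2
  have hfun : (fun s => F2 β n t x (Function.update U (0, 1) s))
      = fun s => β t x (U (0, 0)) * -((n : ℝ) * s ^ (n - 1)) := by
    funext s
    simp only [F2, Function.update_self,
      Function.update_of_ne (by decide : ((0, 0) : ℕ × ℕ) ≠ (0, 1))]
  rw [hfun]
  have h : HasDerivAt (fun s : ℝ => β t x (U (0, 0)) * -((n : ℝ) * s ^ (n - 1)))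
      (β t x (U (0, 0)) * -((n : ℝ) * (((n - 1 : ℕ) : ℝ) * U (0, 1) ^ (n - 1 - 1))))
      (U (0, 1)) :=
    (((hasDerivAt_pow (n - 1) _).const_mul ((n : ℝ))).neg).const_mul _
  exact h.deriv

lemma pj2_G2_01 (β : ℝ → ℝ → ℝ → ℝ) (t x : ℝ) (U : ℕ × ℕ → ℝ) :
    pj2 (G2 β) (0, 1) t x U = -(deriv (fun w => β t x w) (U (0, 0))) := by
  unfold pj2
  have hfun : (fun s => G2 β t x (Function.update U (0, 1) s))
      = fun s => deriv (fun r => -β t r (U (0, 0))) x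
          + s * -(deriv (fun w => β t x w) (U (0, 0))) := by
    funext s
    simp only [G2, Function.update_self,
      Function.update_of_ne (by decide : ((0, 0) : ℕ × ℕ) ≠ (0, 1))]
  rw [hfun]
  have h : HasDerivAt (fun s : ℝ => deriv (fun r => -β t r (U (0, 0))) x
      + s * -(deriv (fun w => β t x w) (U (0, 0))))
      (1 * -(deriv (fun w => β t x w) (U (0, 0)))) (U (0, 1)) :=
    ((hasDerivAt_id _).mul_const _).const_add _
  simpa using h.deriv

/- ### Key difference lemmas -/

lemma key1 (β : ℝ → ℝ → ℝ → ℝ) (n : ℕ) {t x : ℝ} {U U' : ℕ × ℕ → ℝ}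
    (hU : ∀ q, q ≠ ((0, 2) : ℕ × ℕ) → U' q = U q) :
    DT (pj2 (Lb β n) (1, 0)) t x U' = DT (pj2 (Lb β n) (1, 0)) t x U := by
  rw [hL10]
  unfold DT
  have hd : (fun s => G0 β s x U') = (fun s => G0 β s x U) := by
    funext s; simp only [G0, hU (0, 0) (by decide)]
  rw [hd]
  congr 1
  have hsum : ∀ V : ℕ × ℕ → ℝ, (∑' p : ℕ × ℕ, V (p.1 + 1, p.2) * pj2 (G0 β) p t x V)
      = V (1, 0) * pj2 (G0 β) (0, 0) t x V := by
    intro V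
    exact tsum_eq_single ((0, 0) : ℕ × ℕ) (fun p hp => by
      rw [pj2_G0_ne β hp, mul_zero])
  rw [hsum U', hsum U, hU (1, 0) (by decide)]
  congr 1
  refine pj2_00_congr ?_ (hU (0, 0) (by decide))
  funext s
  simp only [G0, Function.update_self]

lemma key2 (β : ℝ → ℝ → ℝ → ℝ) (n : ℕ) {t x : ℝ} {U U' : ℕ × ℕ → ℝ}
    (hU : ∀ q, q ≠ ((0, 2) : ℕ × ℕ) → U' q = U q) :
    DX (pj2 (Lb β n) (0, 1)) t x U' = DX (pj2 (Lb β n) (0, 1)) t x U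
      + (U' (0, 2) - U (0, 2))
        * (β t x (U (0, 0)) * -((n : ℝ) * (((n - 1 : ℕ) : ℝ) * U (0, 1) ^ (n - 1 - 1)))) := by
  rw [hL01]
  unfold DX
  have hd : (fun s => F2 β n t s U') = (fun s => F2 β n t s U) := by
    funext s; simp only [F2, hU (0, 0) (by decide), hU (0, 1) (by decide)]
  rw [hd]
  have hsum : ∀ V : ℕ × ℕ → ℝ, (∑' p : ℕ × ℕ, V (p.1, p.2 + 1) * pj2 (F2 β n) p t x V)
      = V (0, 1) * pj2 (F2 β n) (0, 0) t x V
        + V (0, 2) * (β t x (V (0, 0)) * -((n : ℝ) * (((n - 1 : ℕ) : ℝ) * V (0, 1) ^ (n - 1 - 1)))) := by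
    intro V
    have hz : ∀ p ∉ ({(0, 0), (0, 1)} : Finset (ℕ × ℕ)),
        V (p.1, p.2 + 1) * pj2 (F2 β n) p t x V = 0 := by
      intro p hp
      simp only [Finset.mem_insert, Finset.mem_singleton, not_or] at hp
      rw [pj2_F2_ne β n hp.1 hp.2, mul_zero]
    rw [tsum_eq_sum hz, Finset.sum_insert (by decide), Finset.sum_singleton, pj2_F2_01]
  rw [hsum U', hsum U, hU (0, 1) (by decide), hU (0, 0) (by decide)]
  have hc : pj2 (F2 β n) (0, 0) t x U' = pj2 (F2 β n) (0, 0) t x U := by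
    refine pj2_00_congr ?_ (hU (0, 0) (by decide))
    funext s
    simp only [F2, Function.update_self,
      Function.update_of_ne (by decide : ((0, 1) : ℕ × ℕ) ≠ (0, 0)),
      hU (0, 1) (by decide)]
  rw [hc]
  ring

lemma key3 (β : ℝ → ℝ → ℝ → ℝ) (n : ℕ) {t x : ℝ} {U U' : ℕ × ℕ → ℝ}
    (hU : ∀ q, q ≠ ((0, 2) : ℕ × ℕ) → U' q = U q) :
    DX (DX (pj2 (Lb β n) (0, 2))) t x U' = DX (DX (pj2 (Lb β n) (0, 2))) t x U
      + (U' (0, 2) - U (0, 2)) * -(deriv (fun w => β t x w) (U (0, 0))) := by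
  rw [hL02, hDXG3]
  unfold DX
  have hd : (fun s => G2 β t s U') = (fun s => G2 β t s U) := by
    funext s; simp only [G2, hU (0, 0) (by decide), hU (0, 1) (by decide)]
  rw [hd]
  have hsum : ∀ V : ℕ × ℕ → ℝ, (∑' p : ℕ × ℕ, V (p.1, p.2 + 1) * pj2 (G2 β) p t x V)
      = V (0, 1) * pj2 (G2 β) (0, 0) t x V
        + V (0, 2) * -(deriv (fun w => β t x w) (V (0, 0))) := by
    intro V
    have hz : ∀ p ∉ ({(0, 0), (0, 1)} : Finset (ℕ × ℕ)),
        V (p.1, p.2 + 1) * pj2 (G2 β) p t x V = 0 := by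
      intro p hp
      simp only [Finset.mem_insert, Finset.mem_singleton, not_or] at hp
      rw [pj2_G2_ne β hp.1 hp.2, mul_zero]
    rw [tsum_eq_sum hz, Finset.sum_insert (by decide), Finset.sum_singleton, pj2_G2_01]
  rw [hsum U', hsum U, hU (0, 1) (by decide), hU (0, 0) (by decide)]
  have hc : pj2 (G2 β) (0, 0) t x U' = pj2 (G2 β) (0, 0) t x U := by
    refine pj2_00_congr ?_ (hU (0, 0) (by decide))
    funext s
    simp only [G2, Function.update_self,
      Function.update_of_ne (by decide : ((0, 1) : ℕ × ℕ) ≠ (0, 0)),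
      hU (0, 1) (by decide)]
  rw [hc]
  ring

/-- for n ≥ 3, the equation u_t = u_xx + (u_x)ⁿ admits no
    nonvanishing cosymmetry β = β(t,x,u): there is no smooth nowhere-zero β
    with E_u[β·(u_t − u_xx − u_xⁿ)] ≡ 0 in jet coordinates. -/
theorem stmt_11 (n : ℕ) (hn : 3 ≤ n) :
    ¬ ∃ β : ℝ → ℝ → ℝ → ℝ,
      ContDiff ℝ (⊤ : ℕ∞) (fun p : ℝ × ℝ × ℝ => β p.1 p.2.1 p.2.2) ∧
      (∀ t x w : ℝ, β t x w ≠ 0) ∧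
      (∀ (t x : ℝ) (U : ℕ × ℕ → ℝ),
        EulerU (fun t x U =>
          β t x (U (0, 0)) * (U (1, 0) - U (0, 2) - (U (0, 1)) ^ n)) t x U = 0) := by
  rintro ⟨β, hβ, hne, hE⟩
  have hE' : ∀ (t x : ℝ) (U : ℕ × ℕ → ℝ), EulerU (Lb β n) t x U = 0 := hE
  have hkey : ∀ c : ℝ,
      2 * deriv (fun w => β 0 0 w) 0
        = β 0 0 0 * ((n : ℝ) * (((n - 1 : ℕ) : ℝ) * c ^ (n - 1 - 1))) := by
    intro c
    set U0 : ℕ × ℕ → ℝ := fun p => if p = ((0, 1) : ℕ × ℕ) then c else 0 with hU0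
    set U1 : ℕ × ℕ → ℝ := Function.update U0 (0, 2) 1 with hU1
    have hU : ∀ q, q ≠ ((0, 2) : ℕ × ℕ) → U1 q = U0 q :=
      fun q hq => Function.update_of_ne hq _ _
    have hv00 : U0 (0, 0) = 0 := by simp [hU0, Prod.ext_iff]
    have hv01 : U0 (0, 1) = c := by simp [hU0]
    have hv02 : U0 (0, 2) = 0 := by simp [hU0]
    have hv10 : U0 (1, 0) = 0 := by simp [hU0]
    have hw00 : U1 (0, 0) = 0 := by rw [hU (0, 0) (by decide), hv00]
    have hw01 : U1 (0, 1) = c := by rw [hU (0, 1) (by decide), hv01]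
    have hw02 : U1 (0, 2) = 1 := Function.update_self _ _ _
    have hw10 : U1 (1, 0) = 0 := by rw [hU (1, 0) (by decide), hv10]
    have e1 := hE' 0 0 U1
    have e0 := hE' 0 0 U0
    unfold EulerU at e1 e0
    rw [key1 β n hU, key2 β n hU, key3 β n hU, hL00] at e1
    rw [hL00] at e0
    rw [hw00, hw01, hw02, hw10, hv00, hv01, hv02] at e1
    rw [hv00, hv01, hv02, hv10] at e0
    linear_combination e0 - e1
  have h0 := hkey 0
  have h1 := hkey 1
  rw [zero_pow (by omega : n - 1 - 1 ≠ 0)] at h0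
  simp only [mul_zero] at h0
  have hD : deriv (fun w => β 0 0 w) 0 = 0 := by linarith
  rw [one_pow, hD] at h1
  have hmul : β 0 0 0 * ((n : ℝ) * ((n - 1 : ℕ) : ℝ)) = 0 := by linear_combination -h1
  have hnn : ((n : ℝ) * ((n - 1 : ℕ) : ℝ)) ≠ 0 :=
    mul_ne_zero (Nat.cast_ne_zero.mpr (by omega)) (Nat.cast_ne_zero.mpr (by omega))
  exact hne 0 0 0 ((mul_eq_zero.mp hmul).resolve_right hnn)
end
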